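/- For every function δ₀ : ℝ → ℝ mapping (0,2] into (0,1] there exists a constant r₀ with 0 ≤ r₀ < 1 such that: for every real Banach space E for which δ₀ is a modulus of uniform convexity, every triple U, V, W of invertible linear isometries of E satisfying the Heisenberg relations, all k, m ∈ ℕ (including 0), and every ζ ∈ E with ‖ζ − W^m ζ‖ ≥ (1/2)·‖ζ‖, one has ‖ ((I + U W^k)/2) ∘ ((I + V^m)/2) ζ ‖ ≤ r₀·‖ζ‖. -/
import Mathlib


/-- `δ : ℝ → ℝ` is a *modulus of uniform convexity* for `E`: it maps `(0,2]` into `(0,1]` and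
for every `ε ∈ (0,2]` and all unit vectors `ξ, η` with `‖ξ - η‖ ≥ ε` one has
`‖(ξ + η)/2‖ ≤ 1 - δ ε`. -/
def IsUCModulus (E : Type*) [NormedAddCommGroup E] [NormedSpace ℝ E] (δ : ℝ → ℝ) : Prop :=
  (∀ ε : ℝ, 0 < ε → ε ≤ 2 → 0 < δ ε ∧ δ ε ≤ 1) ∧
    ∀ ε : ℝ, 0 < ε → ε ≤ 2 → ∀ ξ η : E, ‖ξ‖ = 1 → ‖η‖ = 1 → ε ≤ ‖ξ - η‖ →
      ‖(2⁻¹ : ℝ) • (ξ + η)‖ ≤ 1 - δ ε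

/-- `U, V, W` satisfy the Heisenberg relations `W = U⁻¹V⁻¹UV`, `UW = WU`, `VW = WV`
(the multiplication on `E ≃ₗᵢ[ℝ] E` is composition, `(e₁ * e₂) x = e₁ (e₂ x)`). -/
def HeisenbergRel {E : Type*} [NormedAddCommGroup E] [NormedSpace ℝ E]
    (U V W : E ≃ₗᵢ[ℝ] E) : Prop :=
  W = U⁻¹ * V⁻¹ * U * V ∧ U * W = W * U ∧ V * W = W * V

/-- The bounded operator on `E` underlying an invertible linear isometry. -/
noncomputable def isomCLM {E : Type*} [NormedAddCommGroup E] [NormedSpace ℝ E]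
    (U : E ≃ₗᵢ[ℝ] E) : E →L[ℝ] E :=
  U.toLinearIsometry.toContinuousLinearMap

/-- Key group identity: in any group with the Heisenberg relations,
`(UW^k) V^m = V^m ((UW^k) W^m)`. -/
lemma heis_key {G : Type*} [Group G] {U V W : G} (hW : W = U⁻¹ * V⁻¹ * U * V)
    (_hUW : U * W = W * U) (hVW : V * W = W * V) (k m : ℕ) :
    (U * W ^ k) * V ^ m = V ^ m * ((U * W ^ k) * W ^ m) := by
  have hcVW : Commute V W := hVW
  have hUV : U * V = V * (U * W) := by rw [hW]; group
  have hkey : ∀ n : ℕ, U * V ^ n = V ^ n * (U * W ^ n) := by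
    intro n
    induction n with
    | zero => simp
    | succ n ih =>
      calc U * V ^ (n + 1) = (U * V ^ n) * V := by rw [pow_succ, mul_assoc]
        _ = V ^ n * (U * (W ^ n * V)) := by rw [ih]; group
        _ = V ^ n * (U * (V * W ^ n)) := by rw [(hcVW.symm.pow_left n).eq]
        _ = V ^ n * ((U * V) * W ^ n) := by group
        _ = V ^ n * ((V * (U * W)) * W ^ n) := by rw [hUV]
        _ = V ^ (n + 1) * (U * W ^ (n + 1)) := by rw [pow_succ, pow_succ]; group
  calc (U * W ^ k) * V ^ m = U * (W ^ k * V ^ m) := by group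
    _ = U * (V ^ m * W ^ k) := by rw [(hcVW.symm.pow_pow k m).eq]
    _ = (U * V ^ m) * W ^ k := by group
    _ = V ^ m * (U * W ^ m) * W ^ k := by rw [hkey m]
    _ = V ^ m * (U * (W ^ m * W ^ k)) := by group
    _ = V ^ m * ((U * W ^ k) * W ^ m) := by rw [(Commute.refl W).pow_pow m k |>.eq]; group

/-- Scaled version of the uniform convexity inequality. -/
lemma uc_scaled {E : Type*} [NormedAddCommGroup E] [NormedSpace ℝ E] {δ₀ : ℝ → ℝ}
    (hUC : IsUCModulus E δ₀) {R ε : ℝ} (hR : 0 < R) (hε : 0 < ε) (hε2 : ε ≤ 2)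
    {x y : E} (hx : ‖x‖ = R) (hy : ‖y‖ = R) (hxy : ε * R ≤ ‖x - y‖) :
    ‖(2⁻¹ : ℝ) • (x + y)‖ ≤ (1 - δ₀ ε) * R := by
  have hRinv : (0:ℝ) < R⁻¹ := inv_pos.2 hR
  have h1 : ‖R⁻¹ • x‖ = 1 := by
    rw [norm_smul, Real.norm_eq_abs, abs_of_pos hRinv, hx]; field_simp
  have h2 : ‖R⁻¹ • y‖ = 1 := by
    rw [norm_smul, Real.norm_eq_abs, abs_of_pos hRinv, hy]; field_simp
  have h3 : ε ≤ ‖R⁻¹ • x - R⁻¹ • y‖ := by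
    rw [← smul_sub, norm_smul, Real.norm_eq_abs, abs_of_pos hRinv]
    calc ε = R⁻¹ * (ε * R) := by field_simp
      _ ≤ R⁻¹ * ‖x - y‖ := mul_le_mul_of_nonneg_left hxy hRinv.le
  have h4 := hUC.2 ε hε hε2 _ _ h1 h2 h3
  rw [show (2⁻¹:ℝ) • (R⁻¹ • x + R⁻¹ • y) = R⁻¹ • ((2⁻¹:ℝ) • (x + y)) by
    rw [← smul_add, smul_comm]] at h4
  rw [norm_smul, Real.norm_eq_abs, abs_of_pos hRinv] at h4
  calc ‖(2⁻¹:ℝ) • (x + y)‖ = R * (R⁻¹ * ‖(2⁻¹:ℝ) • (x + y)‖) := by field_simp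
    _ ≤ R * (1 - δ₀ ε) := mul_le_mul_of_nonneg_left h4 hR.le
    _ = (1 - δ₀ ε) * R := mul_comm _ _

/-- For every `δ₀` mapping `(0,2]` into `(0,1]` there is `0 ≤ r₀ < 1` such that: for every
real Banach space `E` with modulus of uniform convexity `δ₀`, every Heisenberg triple
`U, V, W` of isometries of `E`, all `k, m ∈ ℕ` and every `ζ` with `‖ζ - W^m ζ‖ ≥ ‖ζ‖/2`,
one has `‖((I + UW^k)/2)((I + V^m)/2) ζ‖ ≤ r₀ ‖ζ‖`. -/
theorem heisenberg_product_inequality.{u}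
    (δ₀ : ℝ → ℝ) (hδ₀ : ∀ ε : ℝ, 0 < ε → ε ≤ 2 → 0 < δ₀ ε ∧ δ₀ ε ≤ 1) :
    ∃ r₀ : ℝ, 0 ≤ r₀ ∧ r₀ < 1 ∧
      ∀ (E : Type u) [NormedAddCommGroup E] [NormedSpace ℝ E] [CompleteSpace E],
        IsUCModulus E δ₀ →
          ∀ U V W : E ≃ₗᵢ[ℝ] E, HeisenbergRel U V W →
            ∀ k m : ℕ, ∀ ζ : E, 2⁻¹ * ‖ζ‖ ≤ ‖ζ - (W ^ m) ζ‖ →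
              ‖((2⁻¹ : ℝ) • (1 + isomCLM (U * W ^ k)))
                  (((2⁻¹ : ℝ) • (1 + isomCLM (V ^ m))) ζ)‖ ≤ r₀ * ‖ζ‖ := by
  obtain ⟨hδpos, hδle⟩ := hδ₀ 16⁻¹ (by norm_num) (by norm_num)
  refine ⟨1 - δ₀ 16⁻¹ / 2, by linarith, by linarith, ?_⟩
  intro E _ _ _ hUC U V W hrel k m ζ hζ
  obtain ⟨hW0, hUW, hVW⟩ := hrel
  rcases eq_or_ne ζ 0 with hz | hz
  · subst hz; simp
  have hnζ : (0:ℝ) < ‖ζ‖ := norm_pos_iff.2 hz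
  by_contra hcon
  push_neg at hcon
  set δ := δ₀ 16⁻¹ with hδdef
  -- notation
  set T : E ≃ₗᵢ[ℝ] E := U * W ^ k with hT
  set v : E := (V ^ m) ζ with hv
  set u : E := T ζ with hu
  set q : E := (2⁻¹:ℝ) • (ζ + v) with hq
  have hcon' : (1 - δ / 2) * ‖ζ‖ < ‖(2⁻¹:ℝ) • (q + T q)‖ := hcon
  have hnv : ‖v‖ = ‖ζ‖ := (V ^ m).norm_map ζ
  have hnu : ‖u‖ = ‖ζ‖ := T.norm_map ζ
  -- associativity rewrite: PQζ = (Pζ + P v)/2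
  have hsplit : (2⁻¹:ℝ) • (q + T q)
      = (2⁻¹:ℝ) • ((2⁻¹:ℝ) • (ζ + u) + (2⁻¹:ℝ) • (v + T v)) := by
    rw [hq, map_smul, map_add, hu]
    module
  -- bound: ‖q‖ ≤ ‖ζ‖, and ‖PQζ‖ ≤ ‖q‖, so ‖q‖ > (1-δ)‖ζ‖
  have hq_le : ‖q‖ ≤ ‖ζ‖ := by
    rw [hq, norm_smul, Real.norm_eq_abs]
    calc |(2:ℝ)⁻¹| * ‖ζ + v‖ ≤ (2:ℝ)⁻¹ * (‖ζ‖ + ‖v‖) := by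
          rw [abs_of_pos (by norm_num : (0:ℝ) < 2⁻¹)]
          exact mul_le_mul_of_nonneg_left (norm_add_le _ _) (by norm_num)
      _ = ‖ζ‖ := by rw [hnv]; ring
  have hPQ_le : ‖(2⁻¹:ℝ) • (q + T q)‖ ≤ ‖q‖ := by
    rw [norm_smul, Real.norm_eq_abs, abs_of_pos (by norm_num : (0:ℝ) < 2⁻¹)]
    calc (2:ℝ)⁻¹ * ‖q + T q‖ ≤ (2:ℝ)⁻¹ * (‖q‖ + ‖T q‖) :=
          mul_le_mul_of_nonneg_left (norm_add_le _ _) (by norm_num)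
      _ = ‖q‖ := by rw [T.norm_map]; ring
  have hq_ge : (1 - δ) * ‖ζ‖ < ‖q‖ := by nlinarith
  -- bound : ‖Pζ‖ > (1-δ)‖ζ‖
  have hpv_le : ‖(2⁻¹:ℝ) • (v + T v)‖ ≤ ‖ζ‖ := by
    rw [norm_smul, Real.norm_eq_abs, abs_of_pos (by norm_num : (0:ℝ) < 2⁻¹)]
    calc (2:ℝ)⁻¹ * ‖v + T v‖ ≤ (2:ℝ)⁻¹ * (‖v‖ + ‖T v‖) :=
          mul_le_mul_of_nonneg_left (norm_add_le _ _) (by norm_num)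
      _ = ‖ζ‖ := by rw [T.norm_map, hnv]; ring
  have hPQ_le2 : ‖(2⁻¹:ℝ) • (q + T q)‖
      ≤ (2:ℝ)⁻¹ * (‖(2⁻¹:ℝ) • (ζ + u)‖ + ‖(2⁻¹:ℝ) • (v + T v)‖) := by
    rw [hsplit, norm_smul, Real.norm_eq_abs, abs_of_pos (by norm_num : (0:ℝ) < 2⁻¹)]
    exact mul_le_mul_of_nonneg_left (norm_add_le _ _) (by norm_num)
  have hp_ge : (1 - δ) * ‖ζ‖ < ‖(2⁻¹:ℝ) • (ζ + u)‖ := by nlinarith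
  -- uniform convexity ⇒ both displacements are small
  have hv_small : ‖ζ - v‖ < 16⁻¹ * ‖ζ‖ := by
    by_contra h
    push_neg at h
    have := uc_scaled ⟨hδ₀, hUC.2⟩ hnζ (by norm_num) (by norm_num) rfl hnv.symm.symm h
    rw [← hq, ← hδdef] at this
    linarith [hq_ge]
  have hu_small : ‖ζ - u‖ < 16⁻¹ * ‖ζ‖ := by
    by_contra h
    push_neg at h
    have := uc_scaled ⟨hδ₀, hUC.2⟩ hnζ (by norm_num) (by norm_num) rfl hnu h
    rw [← hδdef] at this
    linarith [hp_ge]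
  -- group identity: T v = V^m (T (W^m ζ))
  have hgrp := heis_key hW0 hUW hVW k m
  have hTv : T v = (V ^ m) (T ((W ^ m) ζ)) := by
    have := congrArg (fun g : E ≃ₗᵢ[ℝ] E => g ζ) hgrp
    exact this
  -- ‖ζ - W^m ζ‖ = ‖V^m u - T v‖
  have hWm : ‖ζ - (W ^ m) ζ‖ = ‖(V ^ m) u - T v‖ := by
    rw [hTv, hu, ← map_sub, ← map_sub, (V ^ m).norm_map, T.norm_map]
  -- triangle inequality
  have htri : ‖(V ^ m) u - T v‖ ≤ 2 * ‖ζ - u‖ + 2 * ‖ζ - v‖ := by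
    have hdecomp : (V ^ m) u - T v
        = ((V ^ m) u - (V ^ m) ζ) + (v - ζ) + (ζ - u) + (u - T v) := by
      rw [hv]; abel
    have e1 : ‖(V ^ m) u - (V ^ m) ζ‖ = ‖ζ - u‖ := by
      rw [← map_sub, (V ^ m).norm_map, norm_sub_rev]
    have e2 : ‖v - ζ‖ = ‖ζ - v‖ := norm_sub_rev _ _
    have e3 : ‖u - T v‖ = ‖ζ - v‖ := by rw [hu, ← map_sub, T.norm_map]
    calc ‖(V ^ m) u - T v‖
        ≤ ‖((V ^ m) u - (V ^ m) ζ) + (v - ζ) + (ζ - u)‖ + ‖u - T v‖ := by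
          rw [hdecomp]; exact norm_add_le _ _
      _ ≤ (‖((V ^ m) u - (V ^ m) ζ) + (v - ζ)‖ + ‖ζ - u‖) + ‖u - T v‖ := by
          gcongr; exact norm_add_le _ _
      _ ≤ ((‖(V ^ m) u - (V ^ m) ζ‖ + ‖v - ζ‖) + ‖ζ - u‖) + ‖u - T v‖ := by
          gcongr; exact norm_add_le _ _
      _ = 2 * ‖ζ - u‖ + 2 * ‖ζ - v‖ := by rw [e1, e2, e3]; ring
  rw [hWm] at hζ
  linarith
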